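/- Let k ≥ 2. In the group J_k(𝔤): (a) for every v ∈ 𝔤 the element (0, …, 0, v) (v in slot k, zero elsewhere) is central, i.e. commutes with every element of 𝔤^k, and v ↦ (0, …, 0, v) is an injective group homomorphism from the additive group (𝔤, +) into J_k(𝔤); (b) the projection (x_1, …, x_k) ↦ (x_1, …, x_{k−1}) is a surjective group homomorphism from J_k(𝔤) onto J_{k−1}(𝔤) whose kernel is exactly {(0, …, 0, v) : v ∈ 𝔤}. Hence J_k(𝔤) is a central extension of J_{k−1}(𝔤) by (𝔤, +). -/

import Mathlib

/-- `Ncoef [i₁, …, i_ℓ] = C(i₁+⋯+i_ℓ−1, i_ℓ−1) ⋯ C(i₁+i₂−1, i₂−1)`,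
with the empty product (ℓ ≤ 1) equal to 1. -/
def Ncoef : List ℕ → ℕ
  | [] => 1
  | [_] => 1
  | i :: j :: rest => Nat.choose (i + j - 1) (j - 1) * Ncoef ((i + j) :: rest)
termination_by l => l.length

section Defs

variable {R : Type*} [CommRing R] {𝔤 : Type*} [LieRing 𝔤] [LieAlgebra R 𝔤]

/-- Extend a `k`-tuple `(x_1, …, x_k)` (with slot `n` stored at index `n-1`) to a
function on `ℕ`, by `0` outside `{1, …, k}`. -/
def extX (k : ℕ) (x : Fin k → 𝔤) : ℕ → 𝔤 :=
  fun n => if h : 1 ≤ n ∧ n ≤ k then x ⟨n - 1, by omega⟩ else 0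

/-- The `n`-th component of the product on `J_k(𝔤)`:
`z_n = x_n + Σ_{ℓ} Σ_{i₁+⋯+i_ℓ=n} N_{(i₁,…,i_ℓ)} ad_{x_{i_{ℓ−1}}} ⋯ ad_{x_{i₁}} y_{i_ℓ}`. -/
def jetZ (x y : ℕ → 𝔤) (n : ℕ) : 𝔤 :=
  x n + ∑ c : Composition n,
    Ncoef c.blocks •
      (c.blocks.dropLast.foldl (fun v i => ⁅x i, v⁆) (y (c.blocks.getLast?.getD 0)))

/-- The multiplication on `J_k(𝔤) = 𝔤^k`. -/
def jMul (k : ℕ) (x y : Fin k → 𝔤) : Fin k → 𝔤 :=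
  fun j => jetZ (extX k x) (extX k y) (j.val + 1)

end Defs

section CenterExt

variable {R : Type*} [CommRing R] {𝔤 : Type*} [LieRing 𝔤] [LieAlgebra R 𝔤]

/-- The element `(0, …, 0, v)` of `J_k(𝔤)` (`v` in slot `k`, zero elsewhere). -/
def jDelta (k : ℕ) (v : 𝔤) : Fin k → 𝔤 :=
  fun j => if j.val + 1 = k then v else 0

/-- The projection `J_k(𝔤) → J_{k−1}(𝔤)`, `(x_1, …, x_k) ↦ (x_1, …, x_{k−1})`. -/
def jProj (k : ℕ) (x : Fin k → 𝔤) : Fin (k - 1) → 𝔤 :=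
  fun j => x (Fin.castLE (Nat.sub_le k 1) j)

end CenterExt

/-!
Every composition of `n` other than `(n)` has all its blocks `< n` and at least two of them.
So in `z_n` the slot `n` of `y` enters only through the one-block term `y_n`, the slot `n` of
`x` only through `x_n`, and `z_n` depends on `x, y` only through the slots `1, …, n`. Hence an
element `(0, …, 0, v)` supported in the top slot multiplies by plain addition on either side,
while the first `k − 1` slots of a product in `J_k(𝔤)` are computed as in `J_{k−1}(𝔤)`.
-/

namespace Composition

theorem lt_of_mem_blocks_of_ne_single {n : ℕ} {hn : 0 < n} {c : Composition n}
    (hc : c ≠ single n hn) {i : ℕ} (hi : i ∈ c.blocks) : i < n := by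
  obtain ⟨j, rfl⟩ := List.mem_iff_get.1 hi
  exact (ne_single_iff hn).1 hc j

theorem one_lt_length_of_ne_single {n : ℕ} {hn : 0 < n} {c : Composition n}
    (hc : c ≠ single n hn) : 1 < c.length := by
  have hpos : 0 < c.length := c.length_pos_iff.2 hn
  have hne : c.length ≠ 1 := fun h => hc ((eq_single_iff_length hn).2 h)
  omega

theorem blocks_ne_nil {n : ℕ} (hn : 0 < n) (c : Composition n) : c.blocks ≠ [] :=
  List.ne_nil_of_length_pos (c.blocks_length ▸ c.length_pos_iff.2 hn)

end Composition

section Jet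

variable {𝔤 : Type*} [LieRing 𝔤]

theorem foldl_lie_zero (x : ℕ → 𝔤) (l : List ℕ) :
    l.foldl (fun v i => ⁅x i, v⁆) (0 : 𝔤) = 0 := by
  induction l with
  | nil => rfl
  | cons a t ih => simpa using ih

theorem foldl_lie_congr {x x' : ℕ → 𝔤} {l : List ℕ} (h : ∀ i ∈ l, x i = x' i) (v : 𝔤) :
    l.foldl (fun v i => ⁅x i, v⁆) v = l.foldl (fun v i => ⁅x' i, v⁆) v := by
  induction l generalizing v with
  | nil => rfl
  | cons a t ih =>
    rw [List.foldl_cons, List.foldl_cons, h a List.mem_cons_self]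
    exact ih (fun i hi => h i (List.mem_cons_of_mem _ hi)) _

theorem jetZ_eq_add_of_forall_ne_single {x y : ℕ → 𝔤} {n : ℕ} (hn : 0 < n)
    (h : ∀ c : Composition n, c ≠ .single n hn →
      c.blocks.dropLast.foldl (fun v i => ⁅x i, v⁆) (y (c.blocks.getLast?.getD 0)) = 0) :
    jetZ x y n = x n + y n := by
  rw [jetZ, Fintype.sum_eq_single _ fun c hc => by rw [h c hc, smul_zero]]
  simp [Composition.single_blocks, Ncoef]

theorem jetZ_eq_add_of_right_eq_zero {x y : ℕ → 𝔤} {n : ℕ} (hn : 0 < n)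
    (hy : ∀ i, 0 < i → i < n → y i = 0) : jetZ x y n = x n + y n := by
  refine jetZ_eq_add_of_forall_ne_single hn fun c hc => ?_
  have hlast := List.getLast_mem (c.blocks_ne_nil hn)
  rw [List.getLast?_eq_some_getLast (c.blocks_ne_nil hn), Option.getD_some,
    hy _ (c.blocks_pos hlast) (c.lt_of_mem_blocks_of_ne_single hc hlast), foldl_lie_zero]

theorem jetZ_eq_add_of_left_eq_zero {x y : ℕ → 𝔤} {n : ℕ} (hn : 0 < n)
    (hx : ∀ i, 0 < i → i < n → x i = 0) : jetZ x y n = x n + y n := by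
  refine jetZ_eq_add_of_forall_ne_single hn fun c hc => ?_
  obtain ⟨a, t, ht⟩ : ∃ a t, c.blocks.dropLast = a :: t := by
    refine List.exists_cons_of_ne_nil (List.ne_nil_of_length_pos ?_)
    have := c.one_lt_length_of_ne_single hc
    rw [List.length_dropLast, c.blocks_length]
    omega
  have ha : a ∈ c.blocks := List.dropLast_subset _ (ht ▸ List.mem_cons_self)
  rw [ht, List.foldl_cons, hx a (c.blocks_pos ha) (c.lt_of_mem_blocks_of_ne_single hc ha),
    zero_lie, foldl_lie_zero]

theorem jetZ_congr {x x' y y' : ℕ → 𝔤} {n : ℕ} (hn : 0 < n)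
    (hx : Set.EqOn x x' (Set.Icc 1 n)) (hy : Set.EqOn y y' (Set.Icc 1 n)) :
    jetZ x y n = jetZ x' y' n := by
  have hmem : ∀ c : Composition n, ∀ i ∈ c.blocks, i ∈ Set.Icc 1 n :=
    fun c i hi => ⟨c.one_le_blocks hi, c.blocks_le hi⟩
  rw [jetZ, jetZ, hx ⟨hn, le_rfl⟩]
  congr 1
  refine Finset.sum_congr rfl fun c _ => ?_
  have hne := c.blocks_ne_nil hn
  rw [foldl_lie_congr fun i hi => hx (hmem c i (List.dropLast_subset _ hi)),
    List.getLast?_eq_some_getLast hne, Option.getD_some, hy (hmem c _ (List.getLast_mem hne))]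

end Jet

section JetGroup

variable {𝔤 : Type*} [LieRing 𝔤] {k : ℕ}

theorem extX_apply_succ (x : Fin k → 𝔤) (j : Fin k) : extX k x (j + 1) = x j := by
  simp [extX]

theorem jMul_apply (x y : Fin k → 𝔤) (j : Fin k) :
    jMul k x y j = jetZ (extX k x) (extX k y) (j + 1) := rfl

theorem jDelta_apply (v : 𝔤) (j : Fin k) :
    jDelta k v j = (Pi.single k v : ℕ → 𝔤) (j + 1) := by
  simp [jDelta, Pi.single_apply]

theorem jDelta_add (v w : 𝔤) : jDelta k (v + w) = jDelta k v + jDelta k w := by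
  ext j
  simp only [jDelta_apply, Pi.add_apply, Pi.single_add]

theorem extX_jDelta (hk : 0 < k) (v : 𝔤) : extX k (jDelta k v) = Pi.single k v := by
  ext m
  by_cases hm : 1 ≤ m ∧ m ≤ k
  · obtain ⟨j, rfl⟩ : ∃ j : Fin k, m = j + 1 := ⟨⟨m - 1, by omega⟩, by simp; omega⟩
    rw [extX_apply_succ, jDelta_apply]
  · rw [extX, dif_neg hm, Pi.single_eq_of_ne (by omega)]

theorem jMul_jDelta_right (x : Fin k → 𝔤) (v : 𝔤) : jMul k x (jDelta k v) = x + jDelta k v := by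
  ext j
  rw [jMul_apply, extX_jDelta j.pos,
    jetZ_eq_add_of_right_eq_zero (Nat.add_one_pos j) fun i _ hi => Pi.single_eq_of_ne (by omega) _,
    extX_apply_succ, Pi.add_apply, jDelta_apply]

theorem jMul_jDelta_left (v : 𝔤) (x : Fin k → 𝔤) : jMul k (jDelta k v) x = jDelta k v + x := by
  ext j
  rw [jMul_apply, extX_jDelta j.pos,
    jetZ_eq_add_of_left_eq_zero (Nat.add_one_pos j) fun i _ hi => Pi.single_eq_of_ne (by omega) _,
    extX_apply_succ, Pi.add_apply, jDelta_apply]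

theorem jDelta_injective (hk : 0 < k) : Function.Injective (jDelta (𝔤 := 𝔤) k) := by
  intro v w h
  simpa [jDelta, Nat.sub_add_cancel hk] using congrFun h ⟨k - 1, by omega⟩

theorem extX_jProj_eqOn (x : Fin k → 𝔤) :
    Set.EqOn (extX (k - 1) (jProj k x)) (extX k x) (Set.Icc 1 (k - 1)) := by
  rintro m ⟨h1, h2⟩
  rw [extX, extX, dif_pos ⟨h1, h2⟩, dif_pos ⟨h1, by omega⟩]
  rfl

theorem jProj_jMul (x y : Fin k → 𝔤) :
    jProj k (jMul k x y) = jMul (k - 1) (jProj k x) (jProj k y) := by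
  ext j
  have hj : (j : ℕ) + 1 ≤ k - 1 := j.isLt
  refine jetZ_congr (Nat.add_one_pos j) ?_ ?_ |>.symm <;>
    exact (extX_jProj_eqOn _).mono (Set.Icc_subset_Icc_right hj)

theorem jProj_surjective : Function.Surjective (jProj (𝔤 := 𝔤) k) := fun y =>
  ⟨fun j => if h : (j : ℕ) < k - 1 then y ⟨j, h⟩ else 0, funext fun j => dif_pos j.isLt⟩

theorem jProj_eq_zero_iff (hk : 0 < k) (x : Fin k → 𝔤) :
    jProj k x = 0 ↔ ∃ v : 𝔤, x = jDelta k v := by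
  constructor
  · intro h
    refine ⟨x ⟨k - 1, by omega⟩, funext fun j => ?_⟩
    by_cases hj : (j : ℕ) + 1 = k
    · rw [jDelta, if_pos hj]
      exact congrArg x (Fin.ext (by simp only; omega))
    · rw [jDelta, if_neg hj]
      exact congrFun h ⟨j, by omega⟩
  · rintro ⟨v, rfl⟩
    ext j
    have hj : (j : ℕ) + 1 ≠ k := by have := j.isLt; omega
    simp [jProj, jDelta, hj]

end JetGroup

theorem stmt15_general {𝔤 : Type*} [LieRing 𝔤]
    (k : ℕ) (hk : 2 ≤ k) :
    (∀ (v : 𝔤) (x : Fin k → 𝔤), jMul k x (jDelta k v) = jMul k (jDelta k v) x) ∧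
    (∀ v w : 𝔤, jDelta k (v + w) = jMul k (jDelta k v) (jDelta k w)) ∧
    Function.Injective (jDelta (𝔤 := 𝔤) k) ∧
    (∀ x y : Fin k → 𝔤, jProj k (jMul k x y) = jMul (k - 1) (jProj k x) (jProj k y)) ∧
    Function.Surjective (jProj (𝔤 := 𝔤) k) ∧
    (∀ x : Fin k → 𝔤, jProj k x = 0 ↔ ∃ v : 𝔤, x = jDelta k v) :=
  ⟨fun v x => by rw [jMul_jDelta_right, jMul_jDelta_left, add_comm],
    fun v w => by rw [jMul_jDelta_left, jDelta_add],
    jDelta_injective (by omega), jProj_jMul, jProj_surjective,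
    jProj_eq_zero_iff (by omega)⟩

/-- for `k ≥ 2`, (a) each `(0, …, 0, v)` is central in `J_k(𝔤)` and
`v ↦ (0, …, 0, v)` is an injective group homomorphism from `(𝔤, +)` into `J_k(𝔤)`;
(b) the projection `(x_1, …, x_k) ↦ (x_1, …, x_{k−1})` is a surjective group
homomorphism `J_k(𝔤) → J_{k−1}(𝔤)` with kernel exactly `{(0, …, 0, v) : v ∈ 𝔤}`.
Hence `J_k(𝔤)` is a central extension of `J_{k−1}(𝔤)` by `(𝔤, +)`. -/
theorem stmt15 {R : Type*} [CommRing R] {𝔤 : Type*} [LieRing 𝔤] [LieAlgebra R 𝔤]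
    (k : ℕ) (hk : 2 ≤ k) :
    (∀ (v : 𝔤) (x : Fin k → 𝔤), jMul k x (jDelta k v) = jMul k (jDelta k v) x) ∧
    (∀ v w : 𝔤, jDelta k (v + w) = jMul k (jDelta k v) (jDelta k w)) ∧
    Function.Injective (jDelta (𝔤 := 𝔤) k) ∧
    (∀ x y : Fin k → 𝔤, jProj k (jMul k x y) = jMul (k - 1) (jProj k x) (jProj k y)) ∧
    Function.Surjective (jProj (𝔤 := 𝔤) k) ∧
    (∀ x : Fin k → 𝔤, jProj k x = 0 ↔ ∃ v : 𝔤, x = jDelta k v) :=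
  stmt15_general k hk
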